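/- Let (W,S) be a Coxeter system and define Ξ = {(I, w, J) : I, J ⊆ S, w ∈ ᴵWᴶ}, partially ordered by (I,w,J) ≤ (I',w',J') iff I ⊇ I', J ⊇ J', and W_I w W_J ⊇ W_{I'} w' W_{J'}. Then for each face F = (I,w,J), the lower interval {G ∈ Ξ : G ≤ F} is order-isomorphic to the boolean lattice of subsets of (S−I) × (S−J) (i.e., to the product of the powersets of S−I and of S−J ordered by inclusion). -/

import Mathlib

open CoxeterSystem

variable {B W : Type*} [Group W] {M : CoxeterMatrix B}

/-- The standard parabolic subgroup `W_I` generated by the simple reflections indexed by `I`. -/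
def CoxeterSystem.parab (cs : CoxeterSystem M W) (I : Set B) : Subgroup W :=
  Subgroup.closure (cs.simple '' I)

/-- The parabolic double coset `W_I w W_J`. -/
def CoxeterSystem.doset (cs : CoxeterSystem M W) (I : Set B) (w : W) (J : Set B) : Set W :=
  {x | ∃ a ∈ cs.parab I, ∃ b ∈ cs.parab J, x = a * w * b}

/-- `w` is a minimal-length double coset representative for `W_I \ W / W_J`:
`Des_L(w) ⊆ S − I` and `Des_R(w) ⊆ S − J`. -/
def CoxeterSystem.isMinRep (cs : CoxeterSystem M W) (I : Set B) (w : W) (J : Set B) : Prop :=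
  (∀ i ∈ I, ¬ cs.IsLeftDescent w i) ∧ (∀ j ∈ J, ¬ cs.IsRightDescent w j)

/-- Membership in the two-sided Coxeter complex `Ξ`: a triple `(I, w, J)` with
`w ∈ ᴵWᴶ` a minimal-length double coset representative. -/
def CoxeterSystem.inXi (cs : CoxeterSystem M W) (F : Set B × W × Set B) : Prop :=
  cs.isMinRep F.1 F.2.1 F.2.2

/-- The partial order on `Ξ`: `(I,w,J) ≤ (I',w',J')` iff `I ⊇ I'`, `J ⊇ J'`, and
`W_I w W_J ⊇ W_{I'} w' W_{J'}`. -/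
def CoxeterSystem.xiLE (cs : CoxeterSystem M W) (F G : Set B × W × Set B) : Prop :=
  G.1 ⊆ F.1 ∧ G.2.2 ⊆ F.2.2 ∧
    cs.doset G.1 G.2.1 G.2.2 ⊆ cs.doset F.1 F.2.1 F.2.2

/-!
For `G = (I', w', J') ≤ F = (I, w, J)` we have `w ∈ W_{I'} w' W_{J'}`, so this double coset is
`W_{I'} w W_{J'}`, and `w'` is its unique element without left descents in `I'` and right
descents in `J'`. Hence `G` is determined by the pair `(I', J') ⊇ (I, J)`, every such pair occurs,
and `≤` becomes reverse inclusion of pairs, i.e. inclusion of `(S − I', S − J')` inside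
`(S − I, S − J)`.

Uniqueness of the representative: let `x` be a shortest element of the double coset and
`y = π a * x * π b` with words `a` over `I'`, `b` over `J'`. If `a = i :: a'`, then `s i` is not a
left descent of `y`, so it is one of `π (a' ++ ω ++ b)` (`ω` a reduced word of `x`), and the
exchange condition deletes one letter of `a' ++ ω ++ b`; minimality of `x` forces that letter to
lie in `a'` or `b`, which gives a shorter expression of `y`. Induction (using inverses for `b`)
yields `y = x`. The exchange condition comes from Tits' parity representation of `W` on
`W × ZMod 2`, which shows that the parity of the number of occurrences of a reflection in the
left inversion sequence of a word depends only on the product of the word.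
-/

theorem Set.preimage_val_compl_subset_preimage_val_compl_iff {α : Type*} {S X Y : Set α}
    (hX : S ⊆ X) : ((↑) ⁻¹' Xᶜ : Set ↥Sᶜ) ⊆ (↑) ⁻¹' Yᶜ ↔ Y ⊆ X := by
  refine ⟨fun h b hbY => by_contra fun hbX => ?_,
    fun h => Set.preimage_mono (Set.compl_subset_compl.mpr h)⟩
  exact h (a := ⟨b, fun hbS => hbX (hX hbS)⟩) hbX hbY

theorem Set.subset_compl_image_val {α : Type*} {S : Set α} (A : Set ↥Sᶜ) :
    S ⊆ (Subtype.val '' A)ᶜ :=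
  fun _ ha ⟨b, _, hba⟩ => b.2 (hba ▸ ha)

namespace CoxeterSystem

variable (cs : CoxeterSystem M W)

local prefix:100 "s" => cs.simple
local prefix:100 "π" => cs.wordProd
local prefix:100 "ℓ" => cs.length
local prefix:100 "lis" => cs.leftInvSeq

theorem list_prod_map_alternatingWord_two_mul {G : Type*} [Monoid G] (f : B → G) (i j : B)
    (p : ℕ) : ((alternatingWord i j (2 * p)).map f).prod = (f i * f j) ^ p := by
  induction p with
  | zero => simp [alternatingWord]
  | succ p ih =>
    rw [show 2 * (p + 1) = 2 * p + 1 + 1 by ring, alternatingWord_succ', alternatingWord_succ']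
    simp [ih, pow_succ', mul_assoc]

theorem conj_simple_eq_simple_iff (i : B) (t : W) : MulAut.conj (s i) t = s i ↔ t = s i :=
  (MulAut.conj (s i)).injective.eq_iff' (by simp)

section Parity

variable [DecidableEq W]

theorem even_count_leftInvSeq_alternatingWord (i j : B) (t : W) :
    Even ((lis (alternatingWord i j (2 * M i j))).count t) := by
  set p := M i j
  set L := lis (alternatingWord i j (2 * p))
  have hL : L.length = 2 * p := by simp [L]
  have periodic : L.drop p = L.take p := by
    refine List.ext_getElem (by simp [hL]; omega) fun k h₁ h₂ => ?_
    have hk : k < p := by simp [hL] at h₂; omega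
    simp only [List.getElem_drop, List.getElem_take, L]
    rw [getElem_leftInvSeq_alternatingWord, getElem_leftInvSeq_alternatingWord,
      prod_alternatingWord_eq_mul_pow, prod_alternatingWord_eq_mul_pow,
      show (2 * (p + k) + 1) / 2 = k + p by omega, show (2 * k + 1) / 2 = k by omega,
      pow_add, simple_mul_simple_pow', mul_one]
    · simp only [Nat.not_even_two_mul_add_one, if_false]
    all_goals omega
  rw [← List.take_append_drop p L, List.count_append, periodic]
  exact ⟨_, rfl⟩

def parityPerm (i : B) : Equiv.Perm (W × ZMod 2) :=
  Function.Involutive.toPerm (fun p => (MulAut.conj (s i) p.1, p.2 + if p.1 = s i then 1 else 0))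
    (by
      rintro ⟨t, e⟩
      simp only [conj_simple_eq_simple_iff, ← MulAut.mul_apply, ← map_mul, simple_mul_simple_self,
        map_one, MulAut.one_apply, add_assoc, CharTwo.add_self_eq_zero, add_zero])

theorem parityPerm_apply (i : B) (t : W) (e : ZMod 2) :
    cs.parityPerm i (t, e) = (MulAut.conj (s i) t, e + if t = s i then 1 else 0) :=
  rfl

theorem list_prod_map_parityPerm_apply (ω : List B) (t : W) (e : ZMod 2) :
    (ω.map cs.parityPerm).prod (t, e) =
      (MulAut.conj (π ω) t, e + (lis ω).count (MulAut.conj (π ω) t)) := by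
  induction ω generalizing t e with
  | nil => simp
  | cons i ω ih =>
    rw [List.map_cons, List.prod_cons, Equiv.Perm.mul_apply, ih]
    simp only [parityPerm_apply, wordProd_cons, map_mul, MulAut.mul_apply, leftInvSeq,
      List.count_cons, List.count_map_of_injective _ _ (MulAut.conj (s i)).injective, beq_iff_eq,
      eq_comm (a := s i), conj_simple_eq_simple_iff,
      Nat.cast_add, Nat.cast_ite, Nat.cast_one, Nat.cast_zero, add_assoc]

theorem isLiftable_parityPerm : M.IsLiftable cs.parityPerm := by
  intro i j
  rw [← list_prod_map_alternatingWord_two_mul]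
  ext1 ⟨t, e⟩
  have hprod : π (alternatingWord i j (2 * M i j)) = 1 := by
    simp [prod_alternatingWord_eq_mul_pow]
  obtain ⟨n, hn⟩ := cs.even_count_leftInvSeq_alternatingWord i j t
  simp only [list_prod_map_parityPerm_apply, hprod, map_one, MulAut.one_apply, hn, Nat.cast_add,
    CharTwo.add_self_eq_zero, add_zero, Equiv.Perm.one_apply]

def parityRep : W →* Equiv.Perm (W × ZMod 2) :=
  cs.lift ⟨cs.parityPerm, cs.isLiftable_parityPerm⟩

theorem parityRep_wordProd (ω : List B) : cs.parityRep (π ω) = (ω.map cs.parityPerm).prod := by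
  simp [parityRep, wordProd, map_list_prod, Function.comp_def]

theorem cast_count_leftInvSeq_eq_of_wordProd_eq {ω ω' : List B} (h : π ω = π ω') (t : W) :
    ((lis ω).count t : ZMod 2) = (lis ω').count t := by
  have key : ∀ ν : List B,
      cs.parityRep (π ν) (MulAut.conj (π ν)⁻¹ t, 0) = (t, ((lis ν).count t : ZMod 2)) := by
    intro ν
    simp only [parityRep_wordProd, list_prod_map_parityPerm_apply, ← MulAut.mul_apply, ← map_mul,
      mul_inv_cancel, map_one, MulAut.one_apply, zero_add]
  simpa [h] using congrArg Prod.snd ((key ω).symm.trans (h ▸ key ω'))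

end Parity

theorem simple_mem_leftInvSeq_of_isLeftDescent {ω : List B} {i : B}
    (h : cs.IsLeftDescent (π ω) i) : s i ∈ lis ω := by
  classical
  obtain ⟨ν, hν, hprod⟩ := cs.exists_isReduced (s i * π ω)
  have hiν : π (i :: ν) = π ω := by rw [wordProd_cons, ← hprod, simple_mul_simple_cancel_left]
  have hred : cs.IsReduced (i :: ν) := by
    have := cs.isLeftDescent_iff.mp h
    simp only [IsReduced, hiν, List.length_cons, ← hν.eq, ← hprod]
    omega
  have hcount : ((lis (i :: ν)).count (s i) : ZMod 2) = 1 := by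
    rw [List.count_eq_one_of_mem hred.nodup_leftInvSeq (by simp [leftInvSeq]), Nat.cast_one]
  rw [cast_count_leftInvSeq_eq_of_wordProd_eq cs hiν] at hcount
  exact List.count_pos_iff.mp (Nat.pos_of_ne_zero fun h0 => by simp [h0] at hcount)

theorem exists_eraseIdx_wordProd_eq_simple_mul {ω : List B} {i : B}
    (h : cs.IsLeftDescent (π ω) i) : ∃ k < ω.length, π (ω.eraseIdx k) = s i * π ω := by
  obtain ⟨k, hk, hget⟩ := List.getElem_of_mem (cs.simple_mem_leftInvSeq_of_isLeftDescent h)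
  refine ⟨k, by simpa using hk, ?_⟩
  rw [← getD_leftInvSeq_mul_wordProd, List.getD_eq_getElem _ _ hk, hget]

theorem wordProd_mem_parab {I : Set B} {l : List B} (hl : ∀ b ∈ l, b ∈ I) :
    π l ∈ cs.parab I := by
  refine list_prod_mem fun x hx => ?_
  obtain ⟨b, hb, rfl⟩ := List.mem_map.mp hx
  exact Subgroup.subset_closure ⟨b, hl b hb, rfl⟩

theorem mem_parab_iff {I : Set B} {a : W} :
    a ∈ cs.parab I ↔ ∃ l : List B, (∀ b ∈ l, b ∈ I) ∧ π l = a := by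
  constructor
  · intro h
    induction h using Subgroup.closure_induction with
    | mem x hx =>
      obtain ⟨i, hi, rfl⟩ := hx
      exact ⟨[i], by simpa using hi, wordProd_singleton cs i⟩
    | one => exact ⟨[], by simp, wordProd_nil cs⟩
    | mul x y _ _ hx hy =>
      obtain ⟨l, hl, rfl⟩ := hx
      obtain ⟨l', hl', rfl⟩ := hy
      exact ⟨l ++ l', by simpa [or_imp, forall_and] using ⟨hl, hl'⟩, wordProd_append cs l l'⟩
    | inv x _ hx =>
      obtain ⟨l, hl, rfl⟩ := hx
      exact ⟨l.reverse, by simpa using hl, wordProd_reverse cs l⟩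
  · rintro ⟨l, hl, rfl⟩
    exact cs.wordProd_mem_parab hl

theorem mem_doset_self (I : Set B) (w : W) (J : Set B) : w ∈ cs.doset I w J :=
  ⟨1, one_mem _, 1, one_mem _, by simp⟩

theorem mul_mul_mem_doset {I J : Set B} {w x a b : W} (ha : a ∈ cs.parab I) (hb : b ∈ cs.parab J)
    (hx : x ∈ cs.doset I w J) : a * x * b ∈ cs.doset I w J := by
  obtain ⟨a', ha', b', hb', rfl⟩ := hx
  exact ⟨a * a', mul_mem ha ha', b' * b, mul_mem hb' hb, by group⟩

theorem doset_eq_of_mem {I J : Set B} {w x : W} (h : x ∈ cs.doset I w J) :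
    cs.doset I x J = cs.doset I w J := by
  obtain ⟨a, ha, b, hb, rfl⟩ := h
  ext z
  constructor
  · rintro ⟨a', ha', b', hb', rfl⟩
    simpa [mul_assoc] using cs.mul_mul_mem_doset (mul_mem ha' ha) (mul_mem hb hb')
      (cs.mem_doset_self I w J)
  · rintro ⟨a', ha', b', hb', rfl⟩
    simpa [mul_assoc] using cs.mul_mul_mem_doset (mul_mem ha' (inv_mem ha))
      (mul_mem (inv_mem hb) hb') (cs.mem_doset_self I (a * w * b) J)

theorem doset_mono {I I' J J' : Set B} (hI : I ⊆ I') (hJ : J ⊆ J') (w : W) :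
    cs.doset I w J ⊆ cs.doset I' w J' := by
  rintro z ⟨a, ha, b, hb, rfl⟩
  exact ⟨a, Subgroup.closure_mono (Set.image_mono hI) ha,
    b, Subgroup.closure_mono (Set.image_mono hJ) hb, rfl⟩

theorem inv_mem_doset_of_mem_doset_inv {I J : Set B} {w z : W} (h : z ∈ cs.doset J w⁻¹ I) :
    z⁻¹ ∈ cs.doset I w J := by
  obtain ⟨b, hb, a, ha, rfl⟩ := h
  exact ⟨a⁻¹, inv_mem ha, b⁻¹, inv_mem hb, by group⟩

theorem exists_mem_doset_forall_length_le (I : Set B) (w : W) (J : Set B) :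
    ∃ x ∈ cs.doset I w J, ∀ z ∈ cs.doset I x J, ℓ x ≤ ℓ z := by
  obtain ⟨x, hxD, hmin⟩ := (InvImage.wf cs.length wellFounded_lt).has_min (cs.doset I w J)
    ⟨w, cs.mem_doset_self I w J⟩
  refine ⟨x, hxD, fun z hz => not_lt.mp (hmin z ?_)⟩
  rwa [cs.doset_eq_of_mem hxD] at hz

theorem isMinRep_of_forall_length_le {I J : Set B} {x : W}
    (hx : ∀ z ∈ cs.doset I x J, ℓ x ≤ ℓ z) : cs.isMinRep I x J := by
  refine ⟨fun i hi hdesc => ?_, fun j hj hdesc => ?_⟩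
  · have := hx _ (cs.mul_mul_mem_doset (Subgroup.subset_closure ⟨i, hi, rfl⟩) (one_mem _)
      (cs.mem_doset_self I x J))
    rw [mul_one] at this
    exact this.not_gt hdesc
  · have := hx _ (cs.mul_mul_mem_doset (one_mem _) (Subgroup.subset_closure ⟨j, hj, rfl⟩)
      (cs.mem_doset_self I x J))
    rw [one_mul] at this
    exact this.not_gt hdesc

theorem exists_shorter_words_of_not_isLeftDescent {I J : Set B} {x y : W}
    (hx : ∀ z ∈ cs.doset I x J, ℓ x ≤ ℓ z) (hy : ∀ i ∈ I, ¬cs.IsLeftDescent y i)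
    {la lb : List B} (hla : ∀ b ∈ la, b ∈ I) (hlb : ∀ b ∈ lb, b ∈ J) (hne : la ≠ [])
    (hxy : y = π la * x * π lb) :
    ∃ la' lb' : List B, (∀ b ∈ la', b ∈ I) ∧ (∀ b ∈ lb', b ∈ J) ∧
      la'.length + lb'.length < la.length + lb.length ∧ y = π la' * x * π lb' := by
  obtain ⟨i, la, rfl⟩ := List.exists_cons_of_ne_nil hne
  obtain ⟨ωx, hωx, rfl⟩ := cs.exists_isReduced x
  have hprod : π (la ++ ωx ++ lb) = s i * y := by
    simp [hxy, wordProd_append, wordProd_cons, mul_assoc]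
  have hdesc : cs.IsLeftDescent (π (la ++ ωx ++ lb)) i := by
    have := cs.not_isLeftDescent_iff.mp (hy i (hla i List.mem_cons_self))
    rw [cs.isLeftDescent_iff, hprod, simple_mul_simple_cancel_left]
    omega
  obtain ⟨k, -, hk⟩ := cs.exists_eraseIdx_wordProd_eq_simple_mul hdesc
  obtain ⟨αβ, γ, hsplit, hαβ, hγ⟩ :=
    List.sublist_append_iff.mp ((la ++ ωx ++ lb).eraseIdx_sublist k)
  obtain ⟨α, β, rfl, hα, hβ⟩ := List.sublist_append_iff.mp hαβ
  rw [hprod, simple_mul_simple_cancel_left, hsplit, wordProd_append, wordProd_append] at hk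
  have hαI : ∀ b ∈ α, b ∈ I := fun b hb => hla b (List.mem_cons_of_mem i (hα.subset hb))
  have hγJ : ∀ b ∈ γ, b ∈ J := fun b hb => hlb b (hγ.subset hb)
  have hβ_mem : π β ∈ cs.doset I (π ωx) J := by
    have := cs.mul_mul_mem_doset (inv_mem (cs.wordProd_mem_parab hαI))
      (inv_mem (cs.wordProd_mem_parab hγJ))
      ⟨_, cs.wordProd_mem_parab hla, _, cs.wordProd_mem_parab hlb, hxy⟩
    simpa [← hk, mul_assoc] using this
  -- the letter deleted by the exchange cannot come from the reduced word of the shortest `x`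
  have hβ_eq : β = ωx := hβ.eq_of_length_le (by
    have := hx _ hβ_mem
    have := cs.length_wordProd_le β
    rw [hωx.eq] at *
    omega)
  subst hβ_eq
  refine ⟨α, γ, hαI, hγJ, ?_, hk.symm⟩
  have := hα.length_le
  have := hγ.length_le
  simp only [List.length_cons]
  omega

theorem exists_shorter_words_of_not_isRightDescent {I J : Set B} {x y : W}
    (hx : ∀ z ∈ cs.doset I x J, ℓ x ≤ ℓ z) (hy : ∀ j ∈ J, ¬cs.IsRightDescent y j)
    {la lb : List B} (hla : ∀ b ∈ la, b ∈ I) (hlb : ∀ b ∈ lb, b ∈ J) (hne : lb ≠ [])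
    (hxy : y = π la * x * π lb) :
    ∃ la' lb' : List B, (∀ b ∈ la', b ∈ I) ∧ (∀ b ∈ lb', b ∈ J) ∧
      la'.length + lb'.length < la.length + lb.length ∧ y = π la' * x * π lb' := by
  have hx' : ∀ z ∈ cs.doset J x⁻¹ I, ℓ x⁻¹ ≤ ℓ z := fun z hz => by
    simpa using hx _ (cs.inv_mem_doset_of_mem_doset_inv hz)
  obtain ⟨lb', la', hlb', hla', hlt, heq⟩ := cs.exists_shorter_words_of_not_isLeftDescent hx'
    (fun j hj => by simpa [isLeftDescent_inv_iff] using hy j hj)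
    (y := y⁻¹) (la := lb.reverse) (lb := la.reverse) (by simpa using hlb) (by simpa using hla)
    (by simpa using hne) (by simp [hxy, mul_assoc])
  refine ⟨la'.reverse, lb'.reverse, by simpa using hla', by simpa using hlb',
    by simpa [add_comm] using hlt, ?_⟩
  simpa [mul_assoc] using congrArg (·⁻¹) heq

theorem eq_of_isMinRep_of_mem_doset {I J : Set B} {x y : W}
    (hx : ∀ z ∈ cs.doset I x J, ℓ x ≤ ℓ z) (hy : cs.isMinRep I y J) (hxy : y ∈ cs.doset I x J) :
    y = x := by
  obtain ⟨_, ha, _, hb, hxy⟩ := hxy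
  obtain ⟨la, hla, rfl⟩ := cs.mem_parab_iff.mp ha
  obtain ⟨lb, hlb, rfl⟩ := cs.mem_parab_iff.mp hb
  clear ha hb
  induction hn : la.length + lb.length using Nat.strong_induction_on generalizing la lb with
  | _ n ih =>
    by_cases hla0 : la = []
    · by_cases hlb0 : lb = []
      · simpa [hla0, hlb0] using hxy
      obtain ⟨la', lb', hla', hlb', hlt, hxy'⟩ :=
        cs.exists_shorter_words_of_not_isRightDescent hx hy.2 hla hlb hlb0 hxy
      exact ih _ (hn ▸ hlt) la' hla' lb' hlb' hxy' rfl
    · obtain ⟨la', lb', hla', hlb', hlt, hxy'⟩ :=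
        cs.exists_shorter_words_of_not_isLeftDescent hx hy.1 hla hlb hla0 hxy
      exact ih _ (hn ▸ hlt) la' hla' lb' hlb' hxy' rfl

theorem isMinRep_unique {I J : Set B} {y₁ y₂ : W} (h₁ : cs.isMinRep I y₁ J)
    (h₂ : cs.isMinRep I y₂ J) (h : y₂ ∈ cs.doset I y₁ J) : y₁ = y₂ := by
  obtain ⟨x, hxD, hx⟩ := cs.exists_mem_doset_forall_length_le I y₁ J
  have hD := cs.doset_eq_of_mem hxD
  rw [cs.eq_of_isMinRep_of_mem_doset hx h₁ (hD ▸ cs.mem_doset_self I y₁ J),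
    cs.eq_of_isMinRep_of_mem_doset hx h₂ (hD ▸ h)]

theorem xiLE_antisymm {G₁ G₂ : Set B × W × Set B} (h₁ : cs.inXi G₁) (h₂ : cs.inXi G₂)
    (h₁₂ : cs.xiLE G₁ G₂) (h₂₁ : cs.xiLE G₂ G₁) : G₁ = G₂ := by
  obtain ⟨I₁, w₁, J₁⟩ := G₁
  obtain ⟨I₂, w₂, J₂⟩ := G₂
  obtain rfl : I₁ = I₂ := h₂₁.1.antisymm h₁₂.1
  obtain rfl : J₁ = J₂ := h₂₁.2.1.antisymm h₁₂.2.1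
  obtain rfl : w₁ = w₂ := cs.isMinRep_unique h₁ h₂ (h₁₂.2.2 (cs.mem_doset_self I₁ w₂ J₁))
  rfl

theorem doset_eq_of_xiLE {F G : Set B × W × Set B} (h : cs.xiLE G F) :
    cs.doset G.1 G.2.1 G.2.2 = cs.doset G.1 F.2.1 G.2.2 :=
  (cs.doset_eq_of_mem (h.2.2 (cs.mem_doset_self _ _ _))).symm

theorem xiLE_iff_of_xiLE {F G₁ G₂ : Set B × W × Set B} (h₁ : cs.xiLE G₁ F) (h₂ : cs.xiLE G₂ F) :
    cs.xiLE G₁ G₂ ↔ G₂.1 ⊆ G₁.1 ∧ G₂.2.2 ⊆ G₁.2.2 := by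
  refine ⟨fun h => ⟨h.1, h.2.1⟩, fun ⟨hI, hJ⟩ => ⟨hI, hJ, ?_⟩⟩
  rw [cs.doset_eq_of_xiLE h₁, cs.doset_eq_of_xiLE h₂]
  exact cs.doset_mono hI hJ F.2.1

theorem exists_inXi_xiLE (F : Set B × W × Set B) {I J : Set B} (hI : F.1 ⊆ I) (hJ : F.2.2 ⊆ J) :
    ∃ w, cs.inXi (I, w, J) ∧ cs.xiLE (I, w, J) F := by
  obtain ⟨w, hwD, hw⟩ := cs.exists_mem_doset_forall_length_le I F.2.1 J
  refine ⟨w, cs.isMinRep_of_forall_length_le hw, hI, hJ, ?_⟩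
  rw [cs.doset_eq_of_mem hwD]
  exact cs.doset_mono hI hJ F.2.1

end CoxeterSystem

theorem xi_lower_interval_boolean_general (cs : CoxeterSystem M W) (F : Set B × W × Set B) :
    ∃ e : {G : Set B × W × Set B // cs.inXi G ∧ cs.xiLE G F} ≃
        (Set (↥(F.1ᶜ)) × Set (↥(F.2.2ᶜ))),
      ∀ G₁ G₂ : {G : Set B × W × Set B // cs.inXi G ∧ cs.xiLE G F},
        cs.xiLE G₁.1 G₂.1 ↔ e G₁ ≤ e G₂ := by
  let f (G : {G : Set B × W × Set B // cs.inXi G ∧ cs.xiLE G F}) :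
      Set (↥(F.1ᶜ)) × Set (↥(F.2.2ᶜ)) :=
    ((↑) ⁻¹' G.1.1ᶜ, (↑) ⁻¹' G.1.2.2ᶜ)
  have hf (G₁ G₂ : {G : Set B × W × Set B // cs.inXi G ∧ cs.xiLE G F}) :
      cs.xiLE G₁.1 G₂.1 ↔ f G₁ ≤ f G₂ := by
    rw [cs.xiLE_iff_of_xiLE G₁.2.2 G₂.2.2, Prod.mk_le_mk,
      Set.preimage_val_compl_subset_preimage_val_compl_iff G₁.2.2.1,
      Set.preimage_val_compl_subset_preimage_val_compl_iff G₁.2.2.2.1]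
  have hinj : Function.Injective f := fun G₁ G₂ h =>
    Subtype.ext (cs.xiLE_antisymm G₁.2.1 G₂.2.1 ((hf G₁ G₂).mpr h.le) ((hf G₂ G₁).mpr h.ge))
  have hsurj : Function.Surjective f := by
    rintro ⟨A, A'⟩
    obtain ⟨w, hw⟩ := cs.exists_inXi_xiLE F (Set.subset_compl_image_val A)
      (Set.subset_compl_image_val A')
    exact ⟨⟨_, hw⟩, by simp [f]⟩
  exact ⟨Equiv.ofBijective f ⟨hinj, hsurj⟩, hf⟩

/-- For each face `F = (I,w,J)` of the two-sided Coxeter complex `Ξ`,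
the lower interval `{G ∈ Ξ : G ≤ F}` is order-isomorphic to the product of the powersets
of `S − I` and of `S − J`, ordered by inclusion. -/
theorem xi_lower_interval_boolean (cs : CoxeterSystem M W) (F : Set B × W × Set B)
    (hF : cs.inXi F) :
    ∃ e : {G : Set B × W × Set B // cs.inXi G ∧ cs.xiLE G F} ≃
        (Set (↥(F.1ᶜ)) × Set (↥(F.2.2ᶜ))),
      ∀ G₁ G₂ : {G : Set B × W × Set B // cs.inXi G ∧ cs.xiLE G F},
        cs.xiLE G₁.1 G₂.1 ↔ e G₁ ≤ e G₂ :=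
  xi_lower_interval_boolean_general cs F
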